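/- arXiv:q-alg/9703011 — 2 statements merged into one kernel-verified Lean document; each statement's English description precedes it below -/
import Mathlib

section
/- For every integer s ≥ 2, the sum over k from 1 to s-1 of t_k * t_{s-k} * k^2, where t_k = (2k-2)!/(k!(k-1)!), equals s*(2s-2)!/(2*((s-1)!)^2) - 4^(s-2). -/
open Finset

/-- `t k = (2k-2)! / (k! (k-1)!)` as a rational number. -/
def tcoef (k : ℕ) : ℚ :=
  (Nat.factorial (2 * k - 2) : ℚ) / ((Nat.factorial k : ℚ) * (Nat.factorial (k - 1) : ℚ))

lemma cb_cast (n : ℕ) : (Nat.centralBinom n : ℚ) = ((n : ℚ) + 1) * (catalan n : ℚ) := by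
  exact_mod_cast (succ_mul_catalan_eq_centralBinom n).symm

/-- reflection of a sum over range (n+1) -/
lemma sum_reflect (F : ℕ → ℚ) (n : ℕ) :
    ∑ j ∈ range (n + 1), F j = ∑ j ∈ range (n + 1), F (n - j) := by
  have := Finset.sum_range_reflect F (n + 1)
  simpa using this.symm

/-- generic symmetry: twice the `j`-weighted convolution equals `n` times the plain one -/
lemma weighted_symm (c : ℕ → ℚ) (n : ℕ) :
    2 * ∑ j ∈ range (n + 1), (j : ℚ) * c j * c (n - j)
      = (n : ℚ) * ∑ j ∈ range (n + 1), c j * c (n - j) := by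
  have h1 : ∑ j ∈ range (n + 1), (j : ℚ) * c j * c (n - j)
      = ∑ j ∈ range (n + 1), ((n : ℚ) - (j : ℚ)) * c (n - j) * c j := by
    rw [sum_reflect (fun j => (j : ℚ) * c j * c (n - j)) n]
    refine Finset.sum_congr rfl fun j hj => ?_
    have hj' : j ≤ n := by simpa [Nat.lt_succ_iff] using hj
    rw [Nat.sub_sub_self hj', Nat.cast_sub hj']
  rw [two_mul, Finset.mul_sum]
  nth_rewrite 1 [h1]
  rw [← Finset.sum_add_distrib]
  refine Finset.sum_congr rfl fun j hj => ?_
  ring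

lemma cbconv (n : ℕ) :
    ∑ j ∈ range (n + 1), (Nat.centralBinom j : ℚ) * (Nat.centralBinom (n - j) : ℚ)
      = 4 ^ n := by
  induction n with
  | zero => simp [Nat.centralBinom]
  | succ n ih =>
    have hw := weighted_symm (fun j => (Nat.centralBinom j : ℚ)) n
    rw [ih] at hw
    have key : ∑ j ∈ range (n + 2),
          (j : ℚ) * (Nat.centralBinom j : ℚ) * (Nat.centralBinom (n + 1 - j) : ℚ)
        = (2 * (n : ℚ) + 2) * 4 ^ n := by
      rw [Finset.sum_range_succ' (fun j =>
        (j : ℚ) * (Nat.centralBinom j : ℚ) * (Nat.centralBinom (n + 1 - j) : ℚ)) (n + 1)]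
      have hmain : ∑ i ∈ range (n + 1),
            ((i : ℚ) + 1) * (Nat.centralBinom (i + 1) : ℚ) * (Nat.centralBinom (n - i) : ℚ)
          = 4 * (∑ i ∈ range (n + 1),
                (i : ℚ) * (Nat.centralBinom i : ℚ) * (Nat.centralBinom (n - i) : ℚ))
            + 2 * ∑ i ∈ range (n + 1),
                (Nat.centralBinom i : ℚ) * (Nat.centralBinom (n - i) : ℚ) := by
        rw [Finset.mul_sum, Finset.mul_sum, ← Finset.sum_add_distrib]
        refine Finset.sum_congr rfl fun i _ => ?_
        have h' : ((i : ℚ) + 1) * (Nat.centralBinom (i + 1) : ℚ)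
            = 2 * (2 * (i : ℚ) + 1) * (Nat.centralBinom i : ℚ) := by
          exact_mod_cast congrArg (Nat.cast (R := ℚ)) (Nat.succ_mul_centralBinom_succ i)
        calc ((i : ℚ) + 1) * (Nat.centralBinom (i + 1) : ℚ) * (Nat.centralBinom (n - i) : ℚ)
            = (((i : ℚ) + 1) * (Nat.centralBinom (i + 1) : ℚ)) * (Nat.centralBinom (n - i) : ℚ) := by
              ring
          _ = (2 * (2 * (i : ℚ) + 1) * (Nat.centralBinom i : ℚ))
                * (Nat.centralBinom (n - i) : ℚ) := by rw [h']
          _ = 4 * ((i : ℚ) * (Nat.centralBinom i : ℚ) * (Nat.centralBinom (n - i) : ℚ))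
                + 2 * ((Nat.centralBinom i : ℚ) * (Nat.centralBinom (n - i) : ℚ)) := by ring
      push_cast
      rw [hmain, ih]
      linear_combination 2 * hw
    have hsym := weighted_symm (fun j => (Nat.centralBinom j : ℚ)) (n + 1)
    rw [key] at hsym
    push_cast at hsym
    have hne : ((n : ℚ) + 1) ≠ 0 := by positivity
    have hmul : ((n : ℚ) + 1) * (∑ j ∈ range (n + 2),
          (Nat.centralBinom j : ℚ) * (Nat.centralBinom (n + 1 - j) : ℚ))
        = ((n : ℚ) + 1) * 4 ^ (n + 1) := by
      linear_combination -hsym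
    exact mul_left_cancel₀ hne hmul

lemma tcoef_succ (j : ℕ) : tcoef (j + 1) = (catalan j : ℚ) := by
  unfold tcoef
  have h2 : 2 * (j + 1) - 2 = 2 * j := by omega
  have h1 : (j + 1) - 1 = j := by omega
  rw [h2, h1]
  have hfac : (Nat.centralBinom j) * (Nat.factorial j) * (Nat.factorial j)
      = Nat.factorial (2 * j) := by
    have h := Nat.choose_mul_factorial_mul_factorial (show j ≤ 2 * j by omega)
    have h3 : 2 * j - j = j := by omega
    rw [h3] at h
    rw [Nat.centralBinom_eq_two_mul_choose]
    exact h
  have hcast : (Nat.factorial (2 * j) : ℚ)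
      = ((j : ℚ) + 1) * (catalan j : ℚ) * (Nat.factorial j : ℚ) * (Nat.factorial j : ℚ) := by
    rw [← cb_cast]
    exact_mod_cast hfac.symm
  rw [hcast, Nat.factorial_succ]
  have hj : (Nat.factorial j : ℚ) ≠ 0 := by exact_mod_cast (Nat.factorial_pos j).ne'
  have hj1 : ((j : ℚ) + 1) ≠ 0 := by positivity
  field_simp
  push_cast
  ring

lemma catconv (n : ℕ) :
    ∑ j ∈ range (n + 1), (catalan j : ℚ) * (catalan (n - j) : ℚ) = (catalan (n + 1) : ℚ) := by
  have h : (catalan (n + 1) : ℚ) = ∑ i : Fin (n + 1), (catalan i : ℚ) * (catalan (n - i) : ℚ) := by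
    exact_mod_cast congrArg (Nat.cast (R := ℚ)) (catalan_succ n)
  rw [h]
  exact (Fin.sum_univ_eq_sum_range
    (fun k => (catalan k : ℚ) * (catalan (n - k) : ℚ)) (n + 1)).symm

theorem stmt3 (s : ℕ) (hs : 2 ≤ s) :
    ∑ k ∈ Finset.Icc 1 (s - 1), tcoef k * tcoef (s - k) * (k : ℚ) ^ 2 =
      (s : ℚ) * (Nat.factorial (2 * s - 2) : ℚ) / (2 * (Nat.factorial (s - 1) : ℚ) ^ 2)
        - 4 ^ (s - 2) := by
  obtain ⟨n, rfl⟩ : ∃ n, s = n + 2 := ⟨s - 2, by omega⟩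
  have hred : n + 2 - 1 = n + 1 := by omega
  have hred2 : n + 2 - 2 = n := by omega
  rw [hred, hred2]
  rw [← Finset.Ico_add_one_right_eq_Icc, Finset.sum_Ico_eq_sum_range]
  have e : n + 1 + 1 - 1 = n + 1 := by omega
  rw [e]
  have hre : ∀ j ∈ range (n + 1),
      tcoef (1 + j) * tcoef (n + 2 - (1 + j)) * ((1 + j : ℕ) : ℚ) ^ 2
        = (catalan j : ℚ) * (catalan (n - j) : ℚ) * ((j : ℚ) + 1) ^ 2 := by
    intro j hj
    have hj' : j ≤ n := by simpa [Nat.lt_succ_iff] using hj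
    have h1 : n + 2 - (j + 1) = (n - j) + 1 := by omega
    have h2 : 1 + j = j + 1 := by omega
    rw [h2, h1, tcoef_succ, tcoef_succ]
    push_cast
    ring
  rw [Finset.sum_congr rfl hre]
  have hdec : ∑ j ∈ range (n + 1),
        (catalan j : ℚ) * (catalan (n - j) : ℚ) * ((j : ℚ) + 1) ^ 2
      = ((n : ℚ) + 2) * ∑ j ∈ range (n + 1),
            ((j : ℚ) + 1) * ((catalan j : ℚ) * (catalan (n - j) : ℚ))
        - ∑ j ∈ range (n + 1),
            (Nat.centralBinom j : ℚ) * (Nat.centralBinom (n - j) : ℚ) := by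
    rw [Finset.mul_sum, ← Finset.sum_sub_distrib]
    refine Finset.sum_congr rfl fun j hj => ?_
    have hj' : j ≤ n := by simpa [Nat.lt_succ_iff] using hj
    rw [cb_cast, cb_cast]
    have hcast : ((n - j : ℕ) : ℚ) = (n : ℚ) - (j : ℚ) := Nat.cast_sub hj'
    rw [hcast]
    ring
  rw [hdec, cbconv]
  have hT : 2 * ∑ j ∈ range (n + 1),
        ((j : ℚ) + 1) * ((catalan j : ℚ) * (catalan (n - j) : ℚ))
      = ((n : ℚ) + 2) * (catalan (n + 1) : ℚ) := by
    have hw := weighted_symm (fun j => (catalan j : ℚ)) n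
    rw [catconv n] at hw
    have hexp : ∑ j ∈ range (n + 1),
          ((j : ℚ) + 1) * ((catalan j : ℚ) * (catalan (n - j) : ℚ))
        = (∑ j ∈ range (n + 1), (j : ℚ) * (catalan j : ℚ) * (catalan (n - j) : ℚ))
          + ∑ j ∈ range (n + 1), (catalan j : ℚ) * (catalan (n - j) : ℚ) := by
      rw [← Finset.sum_add_distrib]
      refine Finset.sum_congr rfl fun j hj => ?_
      ring
    rw [hexp, catconv n]
    linear_combination hw
  have hfac : (Nat.factorial (2 * (n + 2) - 2) : ℚ)
      = ((n : ℚ) + 2) * (catalan (n + 1) : ℚ)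
        * (Nat.factorial (n + 1) : ℚ) * (Nat.factorial (n + 1) : ℚ) := by
    have h2 : 2 * (n + 2) - 2 = 2 * (n + 1) := by omega
    rw [h2]
    have hfac' : (Nat.centralBinom (n + 1)) * (Nat.factorial (n + 1)) * (Nat.factorial (n + 1))
        = Nat.factorial (2 * (n + 1)) := by
      have h := Nat.choose_mul_factorial_mul_factorial (show n + 1 ≤ 2 * (n + 1) by omega)
      have h3 : 2 * (n + 1) - (n + 1) = n + 1 := by omega
      rw [h3] at h
      rw [Nat.centralBinom_eq_two_mul_choose]
      exact h
    have hcb := cb_cast (n + 1)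
    push_cast at hcb
    calc (Nat.factorial (2 * (n + 1)) : ℚ)
        = (Nat.centralBinom (n + 1) : ℚ) * (Nat.factorial (n + 1) : ℚ)
            * (Nat.factorial (n + 1) : ℚ) := by exact_mod_cast hfac'.symm
      _ = ((n : ℚ) + 2) * (catalan (n + 1) : ℚ)
            * (Nat.factorial (n + 1) : ℚ) * (Nat.factorial (n + 1) : ℚ) := by
          rw [hcb]; ring
  rw [hfac]
  have hT' : ∑ j ∈ range (n + 1),
        ((j : ℚ) + 1) * ((catalan j : ℚ) * (catalan (n - j) : ℚ))
      = ((n : ℚ) + 2) * (catalan (n + 1) : ℚ) / 2 := by linarith [hT]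
  rw [hT']
  have hne : (Nat.factorial (n + 1) : ℚ) ≠ 0 := by
    exact_mod_cast (Nat.factorial_pos (n + 1)).ne'
  push_cast
  field_simp
end

section
/- Let m1, m2 be rationals and define b(k,l) as above with b(k,l)=0 for negative indices, and a(k,l) = (-1)^k (h/2)^{k+l} (b(k,l) - b(k-1,l-1)) for a fixed rational h. Then for all integers k, l ≥ 0: the coefficient combination (k+l)(b(k,l) - b(k-1,l-1)) + 2(m1+k)((2m1+k-l+1)/(2m1+k)) b(k,l-1) + 2(m2+l)((2m2+l-k+1)/(2m2+l)) b(k-1,l) equals zero, provided 2m1+k ≠ 0 and 2m2+l ≠ 0. -/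
/-- `b^{m1,m2}(k,l) = (-2m1-k)_l (-2m2-l)_k / (k! l!)` for `k,l ≥ 0`, and `0` otherwise. -/
noncomputable def bcoef (m1 m2 : ℚ) (k l : ℤ) : ℚ :=
  if 0 ≤ k ∧ 0 ≤ l then
    (ascPochhammer ℚ l.toNat).eval (-2 * m1 - (k : ℚ)) *
        (ascPochhammer ℚ k.toNat).eval (-2 * m2 - (l : ℚ)) /
      ((Nat.factorial k.toNat : ℚ) * (Nat.factorial l.toNat : ℚ))
  else 0

lemma bcoef_nat (m1 m2 : ℚ) (a b : ℕ) :
    bcoef m1 m2 (a : ℤ) (b : ℤ) =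
      (ascPochhammer ℚ b).eval (-2 * m1 - (a : ℚ)) *
        (ascPochhammer ℚ a).eval (-2 * m2 - (b : ℚ)) /
      ((Nat.factorial a : ℚ) * (Nat.factorial b : ℚ)) := by
  simp [bcoef]

lemma poch_shift (n : ℕ) (x : ℚ) :
    x * (ascPochhammer ℚ n).eval (x + 1) = (ascPochhammer ℚ n).eval x * (x + n) := by
  have h1 : (ascPochhammer ℚ (n + 1)).eval x = x * (ascPochhammer ℚ n).eval (x + 1) := by
    rw [ascPochhammer_succ_left]
    simp [Polynomial.eval_comp]
  rw [← h1, ascPochhammer_succ_eval]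

theorem stmt12 (m1 m2 : ℚ) (k l : ℤ) (hk : 0 ≤ k) (hl : 0 ≤ l)
    (h1 : 2 * m1 + (k : ℚ) ≠ 0) (h2 : 2 * m2 + (l : ℚ) ≠ 0) :
    ((k : ℚ) + (l : ℚ)) * (bcoef m1 m2 k l - bcoef m1 m2 (k - 1) (l - 1))
      + 2 * (m1 + (k : ℚ)) * ((2 * m1 + (k : ℚ) - (l : ℚ) + 1) / (2 * m1 + (k : ℚ)))
          * bcoef m1 m2 k (l - 1)
      + 2 * (m2 + (l : ℚ)) * ((2 * m2 + (l : ℚ) - (k : ℚ) + 1) / (2 * m2 + (l : ℚ)))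
          * bcoef m1 m2 (k - 1) l = 0 := by
  lift k to ℕ using hk with a
  lift l to ℕ using hl with b
  have hfa : ∀ n : ℕ, ((Nat.factorial n : ℚ)) ≠ 0 := fun n => by
    exact_mod_cast Nat.factorial_ne_zero n
  match a, b with
  | 0, 0 =>
    have hneg : ¬ ((0:ℤ) ≤ (0:ℤ) - 1 ∧ (0:ℤ) ≤ (0:ℤ) - 1) := by omega
    simp [bcoef]
  | 0, b' + 1 =>
    have e1 : ((0:ℕ):ℤ) - 1 = (-1 : ℤ) := by norm_num
    have e2 : ((b' + 1 : ℕ) : ℤ) - 1 = (b' : ℤ) := by push_cast; ring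
    rw [e1, e2]
    have z1 : bcoef m1 m2 (-1) (b' : ℤ) = 0 := by simp [bcoef]
    have z2 : bcoef m1 m2 (-1) (((b'+1 : ℕ)) : ℤ) = 0 := by
      simp [bcoef]
    rw [z1, z2, bcoef_nat m1 m2 0 (b'+1), bcoef_nat m1 m2 0 b']
    have hx : 2 * m1 + ((0:ℕ) : ℚ) ≠ 0 := h1
    have key := ascPochhammer_succ_eval b' (-2 * m1 - ((0:ℕ):ℚ))
    push_cast at hx key ⊢
    have hm : m1 ≠ 0 := by intro h; apply hx; rw [h]; ring
    rw [key]
    simp only [ascPochhammer_zero, Polynomial.eval_one]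
    rw [Nat.factorial_succ]
    push_cast
    field_simp
    ring
  | a' + 1, 0 =>
    have e1 : ((0:ℕ):ℤ) - 1 = (-1 : ℤ) := by norm_num
    have e2 : ((a' + 1 : ℕ) : ℤ) - 1 = (a' : ℤ) := by push_cast; ring
    rw [e1, e2]
    have z1 : bcoef m1 m2 ((a':ℤ)) (-1) = 0 := by simp [bcoef]
    have z2 : bcoef m1 m2 (((a'+1:ℕ)):ℤ) (-1) = 0 := by simp [bcoef]
    rw [z1, z2]
    rw [bcoef_nat m1 m2 (a'+1) 0, bcoef_nat m1 m2 a' 0]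
    have hy : 2 * m2 + ((0:ℕ) : ℚ) ≠ 0 := h2
    have key := ascPochhammer_succ_eval a' (-2 * m2 - ((0:ℕ):ℚ))
    push_cast at hy key ⊢
    have hm : m2 ≠ 0 := by intro h; apply hy; rw [h]; ring
    rw [key]
    simp only [ascPochhammer_zero, Polynomial.eval_one]
    rw [Nat.factorial_succ]
    push_cast
    field_simp
    ring
  | a' + 1, b' + 1 =>
    have e1 : ((a' + 1 : ℕ) : ℤ) - 1 = (a' : ℤ) := by push_cast; ring
    have e2 : ((b' + 1 : ℕ) : ℤ) - 1 = (b' : ℤ) := by push_cast; ring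
    rw [e1, e2, bcoef_nat, bcoef_nat, bcoef_nat, bcoef_nat]
    set x : ℚ := -2 * m1 - ((a' + 1 : ℕ) : ℚ) with hxdef
    set y : ℚ := -2 * m2 - ((b' + 1 : ℕ) : ℚ) with hydef
    have hx : x ≠ 0 := by
      intro h; apply h1; push_cast at hxdef ⊢
      have := hxdef.symm.trans h; linarith [this]
    have hy : y ≠ 0 := by
      intro h; apply h2; push_cast at hydef ⊢
      have := hydef.symm.trans h; linarith [this]
    have ex : -2 * m1 - ((a' : ℕ) : ℚ) = x + 1 := by push_cast [hxdef]; ring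
    have ey : -2 * m2 - ((b' : ℕ) : ℚ) = y + 1 := by push_cast [hydef]; ring
    rw [ex, ey]
    set A : ℚ := (ascPochhammer ℚ b').eval x with hA
    set B : ℚ := (ascPochhammer ℚ a').eval y with hB
    have f1 : (ascPochhammer ℚ (b' + 1)).eval x = A * (x + b') := ascPochhammer_succ_eval b' x
    have f2 : (ascPochhammer ℚ (a' + 1)).eval y = B * (y + a') := ascPochhammer_succ_eval a' y
    have f3 : (ascPochhammer ℚ b').eval (x + 1) = A * (x + b') / x := by
      field_simp
      exact poch_shift b' x
    have f4 : (ascPochhammer ℚ a').eval (y + 1) = B * (y + a') / y := by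
      field_simp
      exact poch_shift a' y
    have f5 : (ascPochhammer ℚ (b' + 1)).eval (x + 1) = A * (x + b') * (x + b' + 1) / x := by
      field_simp
      rw [poch_shift (b'+1) x, f1]
      push_cast; ring
    have f6 : (ascPochhammer ℚ (a' + 1)).eval (y + 1) = B * (y + a') * (y + a' + 1) / y := by
      field_simp
      rw [poch_shift (a'+1) y, f2]
      push_cast; ring
    rw [f1, f2, f3, f4, f5, f6]
    have hm1 : m1 = (-x - (a' + 1)) / 2 := by push_cast [hxdef]; ring
    have hm2 : m2 = (-y - (b' + 1)) / 2 := by push_cast [hydef]; ring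
    have hh1 : 2 * m1 + ((a' + 1 : ℕ) : ℚ) = -x := by push_cast [hxdef]; ring
    have hh2 : 2 * m2 + ((b' + 1 : ℕ) : ℚ) = -y := by push_cast [hydef]; ring
    rw [Nat.factorial_succ a', Nat.factorial_succ b']
    push_cast
    rw [hm1, hm2]
    have hxne : -x ≠ 0 := neg_ne_zero.mpr hx
    have hyne : -y ≠ 0 := neg_ne_zero.mpr hy
    have hxne' : -x - ((a' : ℚ) + 1) + ((a' : ℚ) + 1) ≠ 0 := by ring_nf; exact hxne
    have hyne' : -y - ((b' : ℚ) + 1) + ((b' : ℚ) + 1) ≠ 0 := by ring_nf; exact hyne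
    field_simp
    ring
end
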